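/- arXiv:2312.03125 — 6 statements merged into one kernel-verified Lean document; each statement's English description precedes it below -/
import Mathlib

section
/- Let 𝔤 be a finite-dimensional real Lie algebra with a nice basis e_1,…,e_n and let D be a derivation of 𝔤. Then the linear map Δ defined by Δ(e_i) = e^i(D e_i)·e_i (the diagonal part of D in the nice basis) is again a derivation of 𝔤; consequently every derivation of 𝔤 splits as the sum of a diagonal derivation and a derivation whose matrix in the nice basis has zeroes on the diagonal. -/
/-!
Write `d i = e^i (D e i)` and `⁅e i, e j⁆ = c • e k`. Condition (ii) of niceness says that the
`k`-th coordinate of `⁅e i, x⁆` only sees the `j`-th coordinate of `x`, and likewise for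
`⁅x, e j⁆` and the `i`-th coordinate. Taking the `k`-th coordinate of
`D ⁅e i, e j⁆ = ⁅D (e i), e j⁆ + ⁅e i, D (e j)⁆` therefore gives `c * d k = d i * c + d j * c`,
which is exactly the Leibniz rule for the diagonal part on the pair `e i, e j`; being bilinear,
the Leibniz rule then holds everywhere.
-/

/-- A basis `e` of a real Lie algebra is *nice* if (i) every bracket `⁅e i, e j⁆` is a
scalar multiple of a single basis vector, and (ii) for all `i, j` there is at most one
index `l` with `e^j ⁅e i, e l⁆ ≠ 0`. -/
def IsNiceBasis {n : ℕ} {L : Type*} [LieRing L] [LieAlgebra ℝ L]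
    (e : Module.Basis (Fin n) ℝ L) : Prop :=
  (∀ i j : Fin n, ∃ (k : Fin n) (c : ℝ), ⁅e i, e j⁆ = c • e k) ∧
  (∀ i j l l' : Fin n, e.coord j ⁅e i, e l⁆ ≠ 0 → e.coord j ⁅e i, e l'⁆ ≠ 0 → l = l')

section

variable {ι R L : Type*} [CommRing R] [LieRing L] [LieAlgebra R L]

def IsLieDerivation (D : Module.End R L) : Prop :=
  ∀ x y : L, D ⁅x, y⁆ = ⁅D x, y⁆ + ⁅x, D y⁆

theorem IsLieDerivation.sub {D E : Module.End R L} (hD : IsLieDerivation D)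
    (hE : IsLieDerivation E) : IsLieDerivation (D - E) := by
  intro x y
  simp only [LinearMap.sub_apply, hD x y, hE x y, sub_lie, lie_sub]
  abel

theorem isLieDerivation_of_basis (e : Module.Basis ι R L) {D : Module.End R L}
    (h : ∀ i j, D ⁅e i, e j⁆ = ⁅D (e i), e j⁆ + ⁅e i, D (e j)⁆) : IsLieDerivation D := by
  let lhs : L →ₗ[R] L →ₗ[R] L := LinearMap.mk₂ R (fun x y => D ⁅x, y⁆)
    (fun x x' y => by simp only [add_lie, map_add])
    (fun c x y => by simp only [smul_lie, map_smul])
    (fun x y y' => by simp only [lie_add, map_add])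
    (fun c x y => by simp only [lie_smul, map_smul])
  let rhs : L →ₗ[R] L →ₗ[R] L := LinearMap.mk₂ R (fun x y => ⁅D x, y⁆ + ⁅x, D y⁆)
    (fun x x' y => by simp only [add_lie, map_add]; abel)
    (fun c x y => by simp only [smul_lie, map_smul, smul_add])
    (fun x y y' => by simp only [lie_add, map_add]; abel)
    (fun c x y => by simp only [lie_smul, map_smul, smul_add])
  exact LinearMap.congr_fun₂ (LinearMap.ext_basis e e h : lhs = rhs)

namespace Module.Basis

variable (e : Module.Basis ι R L)

noncomputable def diagonalPart (D : Module.End R L) : Module.End R L :=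
  e.constr R fun i => e.coord i (D (e i)) • e i

theorem diagonalPart_apply_self (D : Module.End R L) (i : ι) :
    e.diagonalPart D (e i) = e.coord i (D (e i)) • e i :=
  e.constr_basis R _ i

theorem coord_sub_diagonalPart_apply_self (D : Module.End R L) (i : ι) :
    e.coord i ((D - e.diagonalPart D) (e i)) = 0 := by
  simp [diagonalPart_apply_self]

variable {e}

theorem coord_basis_lie {i j k : ι} (h : ∀ l, e.coord k ⁅e i, e l⁆ ≠ 0 → l = j) (x : L) :
    e.coord k ⁅e i, x⁆ = e.coord j x * e.coord k ⁅e i, e j⁆ := by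
  suffices (e.coord k).comp (LieAlgebra.ad R L (e i)) = e.coord k ⁅e i, e j⁆ • e.coord j by
    simpa [mul_comm] using LinearMap.congr_fun this x
  refine e.ext fun l => ?_
  obtain rfl | hlj := eq_or_ne l j
  · simp
  · have : e.coord k ⁅e i, e l⁆ = 0 := by_contra fun hne => hlj (h l hne)
    simp [this, hlj]

theorem coord_lie_basis {i j k : ι} (h : ∀ l, e.coord k ⁅e j, e l⁆ ≠ 0 → l = i) (x : L) :
    e.coord k ⁅x, e j⁆ = e.coord i x * e.coord k ⁅e i, e j⁆ := by
  rw [← lie_skew, map_neg, coord_basis_lie h, ← lie_skew (e i), map_neg, mul_neg]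

theorem diagonalPart_lie_basis {D : Module.End R L} (hD : IsLieDerivation D) {i j k : ι} {c : R}
    (hc : ⁅e i, e j⁆ = c • e k) (hright : ∀ l, e.coord k ⁅e i, e l⁆ ≠ 0 → l = j)
    (hleft : ∀ l, e.coord k ⁅e j, e l⁆ ≠ 0 → l = i) :
    e.diagonalPart D ⁅e i, e j⁆ = ⁅e.diagonalPart D (e i), e j⁆ + ⁅e i, e.diagonalPart D (e j)⁆ := by
  set d : ι → R := fun i => e.coord i (D (e i))
  have hck : e.coord k ⁅e i, e j⁆ = c := by simp [hc]
  have key : c * d k = d i * c + d j * c := by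
    have h := congrArg (e.coord k) (hD (e i) (e j))
    rw [map_add, coord_lie_basis hleft, coord_basis_lie hright (D (e j)), hck, hc, map_smul,
      LinearMap.map_smul] at h
    simpa [d, mul_comm] using h
  calc e.diagonalPart D ⁅e i, e j⁆ = (c * d k) • e k := by
        rw [hc, map_smul, diagonalPart_apply_self, smul_smul]
    _ = ⁅e.diagonalPart D (e i), e j⁆ + ⁅e i, e.diagonalPart D (e j)⁆ := by
        rw [key, diagonalPart_apply_self, diagonalPart_apply_self, smul_lie, lie_smul, hc,
          add_smul, smul_smul, smul_smul]

end Module.Basis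

end

theorem IsNiceBasis.isLieDerivation_diagonalPart {n : ℕ} {L : Type*} [LieRing L]
    [LieAlgebra ℝ L] {e : Module.Basis (Fin n) ℝ L} (he : IsNiceBasis e) {D : Module.End ℝ L}
    (hD : IsLieDerivation D) : IsLieDerivation (e.diagonalPart D) := by
  refine isLieDerivation_of_basis e fun i j => ?_
  obtain ⟨k, c, hc⟩ := he.1 i j
  obtain rfl | hc0 := eq_or_ne c 0
  · simp [hc, Module.Basis.diagonalPart_apply_self]
  have hck : e.coord k ⁅e i, e j⁆ ≠ 0 := by simpa [hc] using hc0
  have hck' : e.coord k ⁅e j, e i⁆ ≠ 0 := by rwa [← lie_skew, map_neg, neg_ne_zero]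
  exact Module.Basis.diagonalPart_lie_basis hD hc (fun l hl => he.2 i k l j hl hck)
    (fun l hl => he.2 j k l i hl hck')

theorem diagonal_part_of_derivation_is_derivation_general
    {n : ℕ} {L : Type*} [LieRing L] [LieAlgebra ℝ L]
    (e : Module.Basis (Fin n) ℝ L) (he : IsNiceBasis e)
    (D : Module.End ℝ L) (hD : ∀ x y : L, D ⁅x, y⁆ = ⁅D x, y⁆ + ⁅x, D y⁆) :
    letI Δ : Module.End ℝ L := e.constr ℝ (fun i => (e.coord i (D (e i))) • e i)
    (∀ x y : L, Δ ⁅x, y⁆ = ⁅Δ x, y⁆ + ⁅x, Δ y⁆) ∧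
    (∀ x y : L, (D - Δ) ⁅x, y⁆ = ⁅(D - Δ) x, y⁆ + ⁅x, (D - Δ) y⁆) ∧
    (∀ i : Fin n, e.coord i ((D - Δ) (e i)) = 0) ∧
    D = Δ + (D - Δ) := by
  have hΔ : IsLieDerivation (e.diagonalPart D) := he.isLieDerivation_diagonalPart hD
  exact ⟨hΔ, IsLieDerivation.sub hD hΔ, e.coord_sub_diagonalPart_apply_self D,
    (add_sub_cancel _ _).symm⟩

/-- The diagonal part (relative to a nice basis) of a derivation is a derivation; hence
every derivation splits as a diagonal derivation plus a derivation with zero diagonal. -/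
theorem diagonal_part_of_derivation_is_derivation
    {n : ℕ} {L : Type*} [LieRing L] [LieAlgebra ℝ L] [FiniteDimensional ℝ L]
    (e : Module.Basis (Fin n) ℝ L) (he : IsNiceBasis e)
    (D : Module.End ℝ L) (hD : ∀ x y : L, D ⁅x, y⁆ = ⁅D x, y⁆ + ⁅x, D y⁆) :
    letI Δ : Module.End ℝ L := e.constr ℝ (fun i => (e.coord i (D (e i))) • e i)
    (∀ x y : L, Δ ⁅x, y⁆ = ⁅Δ x, y⁆ + ⁅x, Δ y⁆) ∧
    (∀ x y : L, (D - Δ) ⁅x, y⁆ = ⁅(D - Δ) x, y⁆ + ⁅x, (D - Δ) y⁆) ∧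
    (∀ i : Fin n, e.coord i ((D - Δ) (e i)) = 0) ∧
    D = Δ + (D - Δ) :=
  diagonal_part_of_derivation_is_derivation_general e he D hD
end

section
/- Assume all a_{ji} ≠ 0, Tr D ≠ 0, and λ_i − λ_j = Tr D for every (i,j) ∈ 𝒜. Then D is diagonalizable over ℝ, i.e. ℝ^n admits a basis consisting of eigenvectors of D. -/
/-!
Write `D = Λ + A` with `Λ = Σ λᵢ e^i⊗e_i` and `A = Σ_{(i,j)∈𝒜} a_{ji} e^i⊗e_j`, and put
`N = Σ_{(i,j)∈𝒜} (a_{ji} / Tr D) e^i⊗e_j`. Because no index of `𝒜` is both a source and a target,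
`A N = N² = 0`, so `P = 1 + N` is invertible, and since `Λ` scales `e^i⊗e_j` by `λ_j` on the left
and by `λ_i` on the right, the hypothesis `λ_i − λ_j = Tr D` is exactly what makes `D P = P Λ`.
The images `P eᵢ` of the standard basis are then eigenvectors of `D`.
-/

/-- The endomorphism `e^i ⊗ e_j` of `ℝ^n`, sending the standard basis vector `e i`
to `e j` and the other standard basis vectors to `0`. -/
noncomputable def elemEnd {n : ℕ} (i j : Fin n) : Module.End ℝ (Fin n → ℝ) :=
  (LinearMap.proj i : (Fin n → ℝ) →ₗ[ℝ] ℝ).smulRight (Pi.single j 1)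

theorem Module.Basis.exists_eigenbasis_of_mul_eq_mul {ι R M : Type*} [CommRing R]
    [AddCommGroup M] [Module R M] (b : Module.Basis ι R M) (μ : ι → R)
    {Λ D P : Module.End R M} (hΛ : ∀ i, Λ (b i) = μ i • b i) (hP : IsUnit P)
    (hDP : D * P = P * Λ) :
    ∃ b' : Module.Basis ι R M, ∀ i, D (b' i) = μ i • b' i := by
  refine ⟨b.map (LinearMap.GeneralLinearGroup.toLinearEquiv hP.unit), fun i => ?_⟩
  change D (P (b i)) = μ i • P (b i)
  rw [← Module.End.mul_apply, hDP, Module.End.mul_apply, hΛ, map_smul]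

theorem isUnit_one_add_of_mul_self_eq_zero {R : Type*} [Ring R] {r : R} (h : r * r = 0) :
    IsUnit (1 + r) :=
  IsNilpotent.isUnit_one_add ⟨2, by rw [pow_two, h]⟩

section elemEnd

variable {n : ℕ}

noncomputable def diagEnd (lam : Fin n → ℝ) : Module.End ℝ (Fin n → ℝ) :=
  ∑ i, lam i • elemEnd i i

noncomputable def pairsEnd (𝒜 : Finset (Fin n × Fin n)) (c : Fin n × Fin n → ℝ) :
    Module.End ℝ (Fin n → ℝ) :=
  ∑ p ∈ 𝒜, c p • elemEnd p.1 p.2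

theorem elemEnd_single (i j k : Fin n) :
    elemEnd i j (Pi.single k 1) = if k = i then Pi.single j 1 else 0 := by
  by_cases h : k = i
  · subst h; simp [elemEnd]
  · simp [elemEnd, h]

theorem elemEnd_mul_elemEnd (i j k l : Fin n) :
    elemEnd k l * elemEnd i j = if j = k then elemEnd i l else 0 := by
  refine Module.Basis.ext (Pi.basisFun ℝ (Fin n)) fun m => ?_
  simp only [Pi.basisFun_apply, Module.End.mul_apply, elemEnd_single]
  split_ifs <;> simp [elemEnd_single, *]

theorem diagEnd_mul_elemEnd (lam : Fin n → ℝ) (i j : Fin n) :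
    diagEnd lam * elemEnd i j = lam j • elemEnd i j := by
  simp [diagEnd, Finset.sum_mul, elemEnd_mul_elemEnd]

theorem elemEnd_mul_diagEnd (lam : Fin n → ℝ) (i j : Fin n) :
    elemEnd i j * diagEnd lam = lam i • elemEnd i j := by
  simp [diagEnd, Finset.mul_sum, elemEnd_mul_elemEnd]

theorem diagEnd_single (lam : Fin n → ℝ) (i : Fin n) :
    diagEnd lam (Pi.single i 1) = lam i • Pi.single i 1 := by
  simp [diagEnd, LinearMap.sum_apply, elemEnd_single]

theorem diagEnd_mul_pairsEnd (lam : Fin n → ℝ) (𝒜 : Finset (Fin n × Fin n))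
    (c : Fin n × Fin n → ℝ) :
    diagEnd lam * pairsEnd 𝒜 c = pairsEnd 𝒜 (fun p => lam p.2 * c p) := by
  simp [pairsEnd, Finset.mul_sum, diagEnd_mul_elemEnd, smul_smul, mul_comm]

theorem pairsEnd_mul_diagEnd (lam : Fin n → ℝ) (𝒜 : Finset (Fin n × Fin n))
    (c : Fin n × Fin n → ℝ) :
    pairsEnd 𝒜 c * diagEnd lam = pairsEnd 𝒜 (fun p => lam p.1 * c p) := by
  simp [pairsEnd, Finset.sum_mul, elemEnd_mul_diagEnd, smul_smul, mul_comm]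

theorem pairsEnd_mul_pairsEnd_eq_zero {𝒜 : Finset (Fin n × Fin n)}
    (h𝒜 : ∀ p ∈ 𝒜, ∀ q ∈ 𝒜, p.1 ≠ q.2) (c d : Fin n × Fin n → ℝ) :
    pairsEnd 𝒜 c * pairsEnd 𝒜 d = 0 := by
  simp only [pairsEnd, Finset.sum_mul, Finset.mul_sum]
  refine Finset.sum_eq_zero fun q hq => Finset.sum_eq_zero fun p hp => ?_
  simp [elemEnd_mul_elemEnd, (h𝒜 p hp q hq).symm]

theorem pairsEnd_add_pairsEnd (𝒜 : Finset (Fin n × Fin n)) (c d : Fin n × Fin n → ℝ) :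
    pairsEnd 𝒜 c + pairsEnd 𝒜 d = pairsEnd 𝒜 (c + d) := by
  simp [pairsEnd, ← Finset.sum_add_distrib, add_smul]

theorem pairsEnd_congr {𝒜 : Finset (Fin n × Fin n)} {c d : Fin n × Fin n → ℝ}
    (h : ∀ p ∈ 𝒜, c p = d p) : pairsEnd 𝒜 c = pairsEnd 𝒜 d :=
  Finset.sum_congr rfl fun p hp => by rw [h p hp]

theorem diagEnd_add_pairsEnd_mul_one_add {𝒜 : Finset (Fin n × Fin n)}
    (h𝒜 : ∀ p ∈ 𝒜, ∀ q ∈ 𝒜, p.1 ≠ q.2) (lam : Fin n → ℝ) (a c : Fin n × Fin n → ℝ)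
    (hac : ∀ p ∈ 𝒜, a p = (lam p.1 - lam p.2) * c p) :
    (diagEnd lam + pairsEnd 𝒜 a) * (1 + pairsEnd 𝒜 c) =
      (1 + pairsEnd 𝒜 c) * diagEnd lam := by
  rw [mul_add, add_mul, add_mul, pairsEnd_mul_pairsEnd_eq_zero h𝒜, diagEnd_mul_pairsEnd,
    add_mul, pairsEnd_mul_diagEnd, mul_one, one_mul, mul_one, add_zero, add_assoc,
    pairsEnd_add_pairsEnd]
  congr 1
  exact pairsEnd_congr fun p hp => by simp only [Pi.add_apply, hac p hp]; ring

end elemEnd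

theorem nondiagonal_derivation_diagonalizable_general
    {n : ℕ} (𝒜 : Finset (Fin n × Fin n))
    (hA₁ : ∀ p ∈ 𝒜, p.1 ≠ p.2)
    (hA₂ : ∀ p ∈ 𝒜, ∀ q ∈ 𝒜, p ≠ q →
      p.1 ≠ q.1 ∧ p.1 ≠ q.2 ∧ p.2 ≠ q.1 ∧ p.2 ≠ q.2)
    (lam : Fin n → ℝ) (a : Fin n × Fin n → ℝ)
    (D : Module.End ℝ (Fin n → ℝ))
    (hD : D = (∑ i, lam i • elemEnd i i) + ∑ p ∈ 𝒜, a p • elemEnd p.1 p.2)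
    (htr : LinearMap.trace ℝ (Fin n → ℝ) D ≠ 0)
    (hlam : ∀ p ∈ 𝒜, lam p.1 - lam p.2 = LinearMap.trace ℝ (Fin n → ℝ) D) :
    ∃ b : Module.Basis (Fin n) ℝ (Fin n → ℝ), ∀ i, ∃ μ : ℝ, D (b i) = μ • b i := by
  have h𝒜 : ∀ p ∈ 𝒜, ∀ q ∈ 𝒜, p.1 ≠ q.2 := fun p hp q hq => by
    by_cases hpq : p = q
    · exact hpq ▸ hA₁ p hp
    · exact (hA₂ p hp q hq hpq).2.1
  set N := pairsEnd 𝒜 fun p => a p / LinearMap.trace ℝ (Fin n → ℝ) D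
  have hDN : D * (1 + N) = (1 + N) * diagEnd lam := by
    refine hD ▸ diagEnd_add_pairsEnd_mul_one_add h𝒜 lam a _ fun p hp => ?_
    rw [hlam p hp, mul_div_cancel₀ _ htr]
  obtain ⟨b, hb⟩ := (Pi.basisFun ℝ (Fin n)).exists_eigenbasis_of_mul_eq_mul lam
    (fun i => by simpa using diagEnd_single lam i)
    (isUnit_one_add_of_mul_self_eq_zero (pairsEnd_mul_pairsEnd_eq_zero h𝒜 _ _)) hDN
  exact ⟨b, fun i => ⟨lam i, hb i⟩⟩

/-- If all `a p ≠ 0`, `Tr D ≠ 0` and `λ i − λ j = Tr D` for all `(i,j) ∈ 𝒜`, then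
`D = Σ λ_i e^i⊗e_i + Σ_{(i,j)∈𝒜} a_{ji} e^i⊗e_j` is diagonalizable over `ℝ`. -/
theorem nondiagonal_derivation_diagonalizable
    {n : ℕ} (hn : 1 ≤ n) (𝒜 : Finset (Fin n × Fin n))
    (hA₁ : ∀ p ∈ 𝒜, p.1 ≠ p.2)
    (hA₂ : ∀ p ∈ 𝒜, ∀ q ∈ 𝒜, p ≠ q →
      p.1 ≠ q.1 ∧ p.1 ≠ q.2 ∧ p.2 ≠ q.1 ∧ p.2 ≠ q.2)
    (lam : Fin n → ℝ) (a : Fin n × Fin n → ℝ) (ha : ∀ p ∈ 𝒜, a p ≠ 0)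
    (D : Module.End ℝ (Fin n → ℝ))
    (hD : D = (∑ i, lam i • elemEnd i i) + ∑ p ∈ 𝒜, a p • elemEnd p.1 p.2)
    (htr : LinearMap.trace ℝ (Fin n → ℝ) D ≠ 0)
    (hlam : ∀ p ∈ 𝒜, lam p.1 - lam p.2 = LinearMap.trace ℝ (Fin n → ℝ) D) :
    ∃ b : Module.Basis (Fin n) ℝ (Fin n → ℝ), ∀ i, ∃ μ : ℝ, D (b i) = μ • b i :=
  nondiagonal_derivation_diagonalizable_general 𝒜 hA₁ hA₂ lam a D hD htr hlam
end

section
/- With D, g, D*, D^s as above, assume all a_{ji} ≠ 0 and Tr D ≠ 0. Then the endomorphism −½[D,D*] + (Tr D)·D^s is diagonal in the standard basis if and only if λ_i − λ_j = Tr D for every (i,j) ∈ 𝒜. -/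
open Matrix

section

variable {ι K : Type*} [Fintype ι] [Field K]

theorem LinearMap.toMatrix'_apply_of_adjoint [DecidableEq ι] {g : ι → K} (hg : ∀ i, g i ≠ 0)
    {D Dstar : Module.End K (ι → K)}
    (hadj : ∀ x y : ι → K, ∑ i, g i * D x i * y i = ∑ i, g i * x i * Dstar y i) (i j : ι) :
    LinearMap.toMatrix' Dstar i j = g j / g i * LinearMap.toMatrix' D j i := by
  have h := hadj (Pi.single i 1) (Pi.single j 1)
  simp only [Pi.single_apply, mul_ite, ite_mul, mul_one, mul_zero, zero_mul, Finset.sum_ite_eq',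
    Finset.mem_univ, if_true] at h
  rw [LinearMap.toMatrix'_apply, LinearMap.toMatrix'_apply]
  field_simp [hg i]
  linear_combination -h

theorem Matrix.mul_apply_eq_add_of_ne {A B : Matrix ι ι K} {i j : ι} (hij : i ≠ j)
    (h : ∀ k, k ≠ i → k ≠ j → A i k * B k j = 0) :
    (A * B) i j = A i i * B i j + A i j * B j j :=
  Fintype.sum_eq_add i j hij fun k hk => h k hk.1 hk.2

theorem Matrix.offDiag_apply_of_weighted_transpose_eq {M Mstar : Matrix ι ι K} {g : ι → K}
    (hg : ∀ i, g i ≠ 0) (hstar : ∀ i j, Mstar i j = g j / g i * M j i)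
    (hrow : ∀ i j k, i ≠ j → k ≠ i → k ≠ j → M k i * M k j = 0)
    (hcol : ∀ i j k, i ≠ j → k ≠ i → k ≠ j → M i k * M j k = 0)
    (t : K) {i j : ι} (hij : i ≠ j) :
    (-(1 / 2 : K) • (M * Mstar - Mstar * M) + t • ((1 / 2 : K) • (M + Mstar))) i j =
      1 / 2 * (M i j * (t - (M j j - M i i)) + Mstar i j * (t - (M i i - M j j))) := by
  have hdiag : ∀ k, Mstar k k = M k k := fun k => by rw [hstar, div_self (hg k), one_mul]
  have hMMstar : (M * Mstar) i j = M i i * Mstar i j + M i j * M j j := by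
    rw [mul_apply_eq_add_of_ne hij fun k hki hkj => ?_, hdiag]
    rw [hstar, mul_left_comm, hcol i j k hij hki hkj, mul_zero]
  have hMstarM : (Mstar * M) i j = M i i * M i j + Mstar i j * M j j := by
    rw [mul_apply_eq_add_of_ne hij fun k hki hkj => ?_, hdiag]
    rw [hstar, mul_assoc, hrow i j k hij hki hkj, mul_zero]
  simp only [add_apply, smul_apply, sub_apply, smul_eq_mul, hMMstar, hMstarM]
  ring

end

section

variable {ι : Type*}

def Finset.HasDisjointIndices (𝒜 : Finset (ι × ι)) : Prop :=
  ∀ p ∈ 𝒜, ∀ q ∈ 𝒜, p ≠ q → p.1 ≠ q.1 ∧ p.1 ≠ q.2 ∧ p.2 ≠ q.1 ∧ p.2 ≠ q.2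

variable {𝒜 : Finset (ι × ι)}

theorem Finset.HasDisjointIndices.swap_notMem (h𝒜 : 𝒜.HasDisjointIndices) {i j : ι}
    (hij : i ≠ j) (hp : (i, j) ∈ 𝒜) : (j, i) ∉ 𝒜 := fun hq =>
  (h𝒜 _ hp _ hq fun h => hij (Prod.ext_iff.1 h).1).2.1 rfl

theorem Finset.HasDisjointIndices.eq_of_fst_eq (h𝒜 : 𝒜.HasDisjointIndices) {p q : ι × ι}
    (hp : p ∈ 𝒜) (hq : q ∈ 𝒜) (h : p.1 = q.1) : p = q :=
  by_contra fun hpq => (h𝒜 p hp q hq hpq).1 h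

theorem Finset.HasDisjointIndices.eq_of_snd_eq (h𝒜 : 𝒜.HasDisjointIndices) {p q : ι × ι}
    (hp : p ∈ 𝒜) (hq : q ∈ 𝒜) (h : p.2 = q.2) : p = q :=
  by_contra fun hpq => (h𝒜 p hp q hq hpq).2.2.2 h

variable {R : Type*} [MulZeroClass R] {M : Matrix ι ι R}

theorem Finset.HasDisjointIndices.apply_mul_apply_eq_zero_of_row (h𝒜 : 𝒜.HasDisjointIndices)
    (hsupp : ∀ i j, i ≠ j → M i j ≠ 0 → (j, i) ∈ 𝒜) {i j k : ι} (hij : i ≠ j) (hki : k ≠ i)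
    (hkj : k ≠ j) : M k i * M k j = 0 := by
  by_contra h
  have hi := hsupp k i hki (left_ne_zero_of_mul h)
  have hj := hsupp k j hkj (right_ne_zero_of_mul h)
  exact hij (Prod.ext_iff.1 (h𝒜.eq_of_snd_eq hi hj rfl)).1

theorem Finset.HasDisjointIndices.apply_mul_apply_eq_zero_of_col (h𝒜 : 𝒜.HasDisjointIndices)
    (hsupp : ∀ i j, i ≠ j → M i j ≠ 0 → (j, i) ∈ 𝒜) {i j k : ι} (hij : i ≠ j) (hki : k ≠ i)
    (hkj : k ≠ j) : M i k * M j k = 0 := by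
  by_contra h
  have hi := hsupp i k hki.symm (left_ne_zero_of_mul h)
  have hj := hsupp j k hkj.symm (right_ne_zero_of_mul h)
  exact hij (Prod.ext_iff.1 (h𝒜.eq_of_fst_eq hi hj rfl)).2

end

theorem Matrix.sum_single_swap_apply {ι α : Type*} [DecidableEq ι] [AddCommMonoid α]
    (𝒜 : Finset (ι × ι)) (a : ι × ι → α) (i j : ι) :
    (∑ p ∈ 𝒜, single p.2 p.1 (a p)) i j = if (j, i) ∈ 𝒜 then a (j, i) else 0 := by
  simp [Matrix.sum_apply, Matrix.single_apply, and_comm, ← Prod.ext_iff (y := (j, i))]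

theorem toMatrix'_elemEnd {n : ℕ} (i j : Fin n) :
    LinearMap.toMatrix' (elemEnd i j) = single j i 1 := by
  ext k l
  simp [elemEnd, Matrix.single_apply, Pi.single_apply, ite_and, eq_comm]

theorem toMatrix'_sum_elemEnd {n : ℕ} (lam : Fin n → ℝ) (𝒜 : Finset (Fin n × Fin n))
    (a : Fin n × Fin n → ℝ) :
    LinearMap.toMatrix' ((∑ i, lam i • elemEnd i i) + ∑ p ∈ 𝒜, a p • elemEnd p.1 p.2) =
      diagonal lam + ∑ p ∈ 𝒜, single p.2 p.1 (a p) := by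
  simp [map_sum, toMatrix'_elemEnd, smul_single, sum_single_eq_diagonal]

theorem Matrix.offDiag_eq_zero_iff_of_weighted_transpose {ι K : Type*} [Fintype ι]
    [DecidableEq ι] [Field K] [NeZero (2 : K)] {𝒜 : Finset (ι × ι)} (h𝒜 : 𝒜.HasDisjointIndices)
    (hA : ∀ p ∈ 𝒜, p.1 ≠ p.2) {a : ι × ι → K} (ha : ∀ p ∈ 𝒜, a p ≠ 0) {lam g : ι → K}
    (hg : ∀ i, g i ≠ 0) {M Mstar : Matrix ι ι K} (hdiag : ∀ i, M i i = lam i)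
    (hoff : ∀ i j, i ≠ j → M i j = if (j, i) ∈ 𝒜 then a (j, i) else 0)
    (hstar : ∀ i j, Mstar i j = g j / g i * M j i) (t : K) :
    (∀ i j, i ≠ j →
        (-(1 / 2 : K) • (M * Mstar - Mstar * M) + t • ((1 / 2 : K) • (M + Mstar))) i j = 0) ↔
      ∀ p ∈ 𝒜, lam p.1 - lam p.2 = t := by
  have hsupp (i j : ι) (hij : i ≠ j) (h : M i j ≠ 0) : (j, i) ∈ 𝒜 := by
    by_contra hn
    exact h (by rw [hoff i j hij, if_neg hn])
  have hentry {i j : ι} (hij : i ≠ j) :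
      (-(1 / 2 : K) • (M * Mstar - Mstar * M) + t • ((1 / 2 : K) • (M + Mstar))) i j =
        1 / 2 * (M i j * (t - (lam j - lam i)) + g j / g i * (M j i * (t - (lam i - lam j)))) := by
    rw [offDiag_apply_of_weighted_transpose_eq hg hstar
      (fun _ _ _ => h𝒜.apply_mul_apply_eq_zero_of_row hsupp)
      (fun _ _ _ => h𝒜.apply_mul_apply_eq_zero_of_col hsupp) t hij, hstar, hdiag, hdiag]
    ring
  have hvanish {i j : ι} (hij : i ≠ j) (h : ∀ p ∈ 𝒜, lam p.1 - lam p.2 = t) :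
      M i j * (t - (lam j - lam i)) = 0 := by
    rw [hoff i j hij]
    split_ifs with hp
    · rw [h _ hp, sub_self, mul_zero]
    · rw [zero_mul]
  constructor
  · rintro h ⟨j, i⟩ hp
    have hij : i ≠ j := (hA _ hp).symm
    have hji : M j i = 0 := by rw [hoff j i hij.symm, if_neg (h𝒜.swap_notMem hij.symm hp)]
    have h0 := h i j hij
    rw [hentry hij, hoff i j hij, if_pos hp, hji, zero_mul, mul_zero, add_zero] at h0
    have h1 := (mul_eq_zero.1 h0).resolve_left (one_div_ne_zero two_ne_zero)
    exact (sub_eq_zero.1 ((mul_eq_zero.1 h1).resolve_left (ha _ hp))).symm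
  · intro h i j hij
    rw [hentry hij, hvanish hij h, hvanish hij.symm h]
    ring

theorem offdiagonal_condition_general
    {n : ℕ} (𝒜 : Finset (Fin n × Fin n))
    (hA₁ : ∀ p ∈ 𝒜, p.1 ≠ p.2)
    (hA₂ : ∀ p ∈ 𝒜, ∀ q ∈ 𝒜, p ≠ q →
      p.1 ≠ q.1 ∧ p.1 ≠ q.2 ∧ p.2 ≠ q.1 ∧ p.2 ≠ q.2)
    (lam : Fin n → ℝ) (a : Fin n × Fin n → ℝ) (ha : ∀ p ∈ 𝒜, a p ≠ 0)
    (D : Module.End ℝ (Fin n → ℝ))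
    (hD : D = (∑ i, lam i • elemEnd i i) + ∑ p ∈ 𝒜, a p • elemEnd p.1 p.2)
    (gv : Fin n → ℝ) (hg : ∀ i, gv i ≠ 0)
    (Dstar : Module.End ℝ (Fin n → ℝ))
    (hadj : ∀ x y : Fin n → ℝ,
      (∑ i, gv i * (D x) i * y i) = ∑ i, gv i * x i * (Dstar y) i)
    (Ds : Module.End ℝ (Fin n → ℝ)) (hDs : Ds = (1 / 2 : ℝ) • (D + Dstar)) :
    (∀ i j : Fin n, i ≠ j →
        ((-(1 / 2 : ℝ)) • (D * Dstar - Dstar * D) +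
          LinearMap.trace ℝ (Fin n → ℝ) D • Ds) (Pi.single j 1) i = 0) ↔
      ∀ p ∈ 𝒜, lam p.1 - lam p.2 = LinearMap.trace ℝ (Fin n → ℝ) D := by
  have hM (i j : Fin n) : LinearMap.toMatrix' D i j =
      (if i = j then lam i else 0) + if (j, i) ∈ 𝒜 then a (j, i) else 0 := by
    rw [hD, toMatrix'_sum_elemEnd, Matrix.add_apply, diagonal_apply, sum_single_swap_apply]
  have hdiag (i : Fin n) : LinearMap.toMatrix' D i i = lam i := by
    simp [hM, show (i, i) ∉ 𝒜 from fun h => hA₁ _ h rfl]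
  have hoff (i j : Fin n) (hij : i ≠ j) :
      LinearMap.toMatrix' D i j = if (j, i) ∈ 𝒜 then a (j, i) else 0 := by
    simp [hM, hij]
  simp only [← LinearMap.toMatrix'_apply, hDs, map_add, map_sub, map_smul, LinearMap.toMatrix'_mul]
  exact offDiag_eq_zero_iff_of_weighted_transpose hA₂ hA₁ ha hg hdiag hoff
    (LinearMap.toMatrix'_apply_of_adjoint hg hadj) _

/-- The endomorphism `−½[D,D*] + (Tr D)·D^s` is diagonal in the standard basis if and
only if `λ i − λ j = Tr D` for every `(i,j) ∈ 𝒜`. -/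
theorem offdiagonal_condition
    {n : ℕ} (hn : 1 ≤ n) (𝒜 : Finset (Fin n × Fin n))
    (hA₁ : ∀ p ∈ 𝒜, p.1 ≠ p.2)
    (hA₂ : ∀ p ∈ 𝒜, ∀ q ∈ 𝒜, p ≠ q →
      p.1 ≠ q.1 ∧ p.1 ≠ q.2 ∧ p.2 ≠ q.1 ∧ p.2 ≠ q.2)
    (lam : Fin n → ℝ) (a : Fin n × Fin n → ℝ) (ha : ∀ p ∈ 𝒜, a p ≠ 0)
    (D : Module.End ℝ (Fin n → ℝ))
    (hD : D = (∑ i, lam i • elemEnd i i) + ∑ p ∈ 𝒜, a p • elemEnd p.1 p.2)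
    (htr : LinearMap.trace ℝ (Fin n → ℝ) D ≠ 0)
    (gv : Fin n → ℝ) (hg : ∀ i, gv i ≠ 0)
    (Dstar : Module.End ℝ (Fin n → ℝ))
    (hadj : ∀ x y : Fin n → ℝ,
      (∑ i, gv i * (D x) i * y i) = ∑ i, gv i * x i * (Dstar y) i)
    (Ds : Module.End ℝ (Fin n → ℝ)) (hDs : Ds = (1 / 2 : ℝ) • (D + Dstar)) :
    (∀ i j : Fin n, i ≠ j →
        ((-(1 / 2 : ℝ)) • (D * Dstar - Dstar * D) +
          LinearMap.trace ℝ (Fin n → ℝ) D • Ds) (Pi.single j 1) i = 0) ↔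
      ∀ p ∈ 𝒜, lam p.1 - lam p.2 = LinearMap.trace ℝ (Fin n → ℝ) D :=
  offdiagonal_condition_general 𝒜 hA₁ hA₂ lam a ha D hD gv hg Dstar hadj Ds hDs
end

section
/- Let 𝔤 be a nilpotent finite-dimensional real Lie algebra with a nice basis e_1,…,e_n. Then e^l([v, e_l]) = 0 for every v ∈ 𝔤 and every index l; consequently, Tr(ad v ∘ T) = 0 for every v ∈ 𝔤 and every endomorphism T of 𝔤 that is diagonal in the nice basis. -/
open Module

theorem LieAlgebra.eq_zero_of_lie_eq_smul {R L : Type*} [CommRing R] [IsDomain R] [LieRing L]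
    [LieAlgebra R L] [IsTorsionFree R L] [LieRing.IsNilpotent L] {x y : L} {c : R}
    (hy : y ≠ 0) (h : ⁅x, y⁆ = c • y) : c = 0 := by
  have hc : (ad R L x).HasEigenvalue c :=
    End.hasEigenvalue_of_hasEigenvector ⟨End.mem_eigenspace_iff.2 h, hy⟩
  exact (hc.isNilpotent_of_isNilpotent
    (LieModule.isNilpotent_toEnd_of_isNilpotent R L L x)).eq_zero

namespace Module.Basis

variable {ι R L : Type*} [CommRing R] [IsDomain R] [LieRing L] [LieAlgebra R L]
  [LieRing.IsNilpotent L] (e : Basis ι R L)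

theorem coord_lie_basis_self_eq_zero
    (he : ∀ i j, ∃ (k : ι) (c : R), ⁅e i, e j⁆ = c • e k) (i l : ι) : e.coord l ⁅e i, e l⁆ = 0 := by
  classical
  obtain ⟨k, c, hk⟩ := he i l
  rw [hk, map_smul, coord_apply, repr_self, Finsupp.single_apply, smul_eq_mul]
  split_ifs with hkl
  · subst hkl
    have : IsTorsionFree R L := e.isTorsionFree
    rw [LieAlgebra.eq_zero_of_lie_eq_smul (e.ne_zero k) hk, zero_mul]
  · exact mul_zero c

theorem coord_lie_self_eq_zero (he : ∀ i j, ∃ (k : ι) (c : R), ⁅e i, e j⁆ = c • e k)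
    (v : L) (l : ι) : e.coord l ⁅v, e l⁆ = 0 := by
  have hzero : e.coord l ∘ₗ LieAlgebra.ad R L (e l) = 0 := e.ext fun i => by
    simp only [LinearMap.comp_apply, LieAlgebra.ad_apply, LinearMap.zero_apply]
    rw [← lie_skew, map_neg, e.coord_lie_basis_self_eq_zero he, neg_zero]
  rw [← lie_skew, map_neg, ← LieAlgebra.ad_apply R, ← LinearMap.comp_apply, hzero,
    LinearMap.zero_apply, neg_zero]

end Module.Basis

theorem LinearMap.trace_comp_eq_zero_of_coord_apply_self_eq_zero {ι R M : Type*} [Fintype ι]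
    [DecidableEq ι] [CommRing R] [AddCommGroup M] [Module R M] (e : Basis ι R M)
    {A T : Module.End R M} (hA : ∀ l, e.coord l (A (e l)) = 0)
    (hT : ∀ j, ∃ c : R, T (e j) = c • e j) : trace R M (A ∘ₗ T) = 0 := by
  rw [trace_eq_matrix_trace R e, Matrix.trace]
  refine Finset.sum_eq_zero fun l _ => ?_
  obtain ⟨c, hc⟩ := hT l
  rw [Matrix.diag_apply, toMatrix_apply, comp_apply, hc, map_smul, map_smul, Finsupp.smul_apply,
    ← Basis.coord_apply, hA, smul_zero]

theorem trace_ad_comp_diagonal_eq_zero_general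
    {n : ℕ} {L : Type*} [LieRing L] [LieAlgebra ℝ L]
    [LieRing.IsNilpotent L]
    (e : Module.Basis (Fin n) ℝ L) (he : IsNiceBasis e) :
    (∀ (v : L) (l : Fin n), e.coord l ⁅v, e l⁆ = 0) ∧
    (∀ (v : L) (T : Module.End ℝ L), (∀ j : Fin n, ∃ c : ℝ, T (e j) = c • e j) →
      LinearMap.trace ℝ L ((LieAlgebra.ad ℝ L v : Module.End ℝ L) ∘ₗ T) = 0) :=
  ⟨e.coord_lie_self_eq_zero he.1, fun v _ hT =>
    LinearMap.trace_comp_eq_zero_of_coord_apply_self_eq_zero e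
      (fun l => e.coord_lie_self_eq_zero he.1 v l) hT⟩

/-- On a nilpotent Lie algebra with a nice basis, `e^l ⁅v, e l⁆ = 0` for every `v` and
every `l`; consequently `Tr(ad v ∘ T) = 0` for every endomorphism `T` that is diagonal
in the nice basis. -/
theorem trace_ad_comp_diagonal_eq_zero
    {n : ℕ} {L : Type*} [LieRing L] [LieAlgebra ℝ L] [FiniteDimensional ℝ L]
    [LieRing.IsNilpotent L]
    (e : Module.Basis (Fin n) ℝ L) (he : IsNiceBasis e) :
    (∀ (v : L) (l : Fin n), e.coord l ⁅v, e l⁆ = 0) ∧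
    (∀ (v : L) (T : Module.End ℝ L), (∀ j : Fin n, ∃ c : ℝ, T (e j) = c • e j) →
      LinearMap.trace ℝ L ((LieAlgebra.ad ℝ L v : Module.End ℝ L) ∘ₗ T) = 0) :=
  trace_ad_comp_diagonal_eq_zero_general e he
end

section
/- Let 𝔤₁ be the real Lie algebra with basis e_1, e_2, e_3, e_4 and nonzero brackets [e_1,e_2] = (4/7)e_3, [e_4,e_1] = (6/7)e_1 + (8/7)e_2, [e_4,e_2] = −(2/7)e_2, [e_4,e_3] = (4/7)e_3, and let 𝔤₂ be the real Lie algebra with basis f_1, f_2, f_3, f_4 and nonzero brackets [f_1,f_2] = (√3/3)f_3, [f_4,f_1] = (√3/6)f_1, [f_4,f_2] = (√3/6)f_2, [f_4,f_3] = (√3/3)f_3. Then 𝔤₁ and 𝔤₂ are solvable Lie algebras and they are not isomorphic as real Lie algebras. -/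
/-!
Both algebras are extensions `ℝ b₃ ⋉ 𝔫` of the ideal `𝔫 = span {b₀, b₁, b₂}`, in which only
`⁅b₀, b₁⁆ ∈ ℝ b₂` is nonzero, by a derivation `ad b₃` that is triangular on `𝔫` with diagonal
`(d₀, d₁, d₂)`. The flag `L ⊇ 𝔫 ⊇ ℝ b₂ ⊇ 0` bounds the derived series, so both are solvable.

For `y ∈ 𝔫`, `ad y` lowers that flag, so the Killing form and `tr ∘ ad` only see the
`b₃`-coordinate `t` of `y`: `K(y, y) = (d₀² + d₁² + d₂²) t²` and `tr (ad y) = (d₀ + d₁ + d₂) t`.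
In `𝔤₂`, where `(d₀, d₁, d₂) = (√3/6, √3/6, √3/3)`, every `y` therefore satisfies
`8 K(y, y) = 3 (tr ad y)²`, while `e 3 ∈ 𝔤₁` has `K(e 3, e 3) = tr (ad (e 3)) = 8/7`.
An isomorphism preserves both quantities.
-/

open LieAlgebra

section Basis

variable {R M ι : Type*} [CommRing R] [AddCommGroup M] [Module R M] (b : Module.Basis ι R M)

theorem LinearMap.trace_eq_sum_basis_repr [Fintype ι] [DecidableEq ι] (g : M →ₗ[R] M) :
    LinearMap.trace R M g = ∑ i, b.repr (g (b i)) i := by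
  simp [LinearMap.trace_eq_matrix_trace R b, Matrix.trace, LinearMap.toMatrix_apply]

theorem Module.Basis.apply_eq_repr_mul_of_apply_eq_zero (k : ι) {f : M →ₗ[R] R}
    (hf : ∀ i ≠ k, f (b i) = 0) (x : M) : f x = b.repr x k * f (b k) := by
  have hf_eq : f = f (b k) • b.coord k := b.ext fun i => by
    by_cases hi : i = k
    · subst hi; simp
    · simp [hf i hi, Ne.symm hi]
  conv_lhs => rw [hf_eq]
  simp [mul_comm]

theorem LinearMap.apply_apply_eq_repr_mul_repr_of_apply_basis_eq_zero (k : ι)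
    {B : M →ₗ[R] M →ₗ[R] R} (hB : ∀ i j, (i ≠ k ∨ j ≠ k) → B (b i) (b j) = 0) (x y : M) :
    B x y = b.repr x k * b.repr y k * B (b k) (b k) := by
  classical
  have hB_eq : B = B (b k) (b k) • (b.coord k).smulRight (b.coord k) :=
    LinearMap.ext_basis b b fun i j => by
      by_cases hij : i = k ∧ j = k
      · obtain ⟨rfl, rfl⟩ := hij; simp
      · rw [hB i j (not_and_or.mp hij)]
        simp only [LinearMap.smul_apply, LinearMap.smulRight_apply, Module.Basis.coord_apply,
          Module.Basis.repr_self, Finsupp.single_apply, smul_eq_mul]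
        split_ifs <;> simp_all
  conv_lhs => rw [hB_eq]
  simp only [LinearMap.smul_apply, LinearMap.smulRight_apply, Module.Basis.coord_apply,
    smul_eq_mul]
  ring

end Basis

section Solvable

variable {R L : Type*} [CommRing R] [LieRing L] [LieAlgebra R L]

theorem Submodule.lie_mem_of_mem_span {S : Submodule R L} {s t : Set L}
    (h : ∀ x ∈ s, ∀ y ∈ t, ⁅x, y⁆ ∈ S) {x y : L} (hx : x ∈ Submodule.span R s)
    (hy : y ∈ Submodule.span R t) : ⁅x, y⁆ ∈ S := by
  induction hx, hy using Submodule.span_induction₂ with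
  | mem_mem x y hx hy => exact h x hx y hy
  | zero_left => simp
  | zero_right => simp
  | add_left _ _ _ _ _ _ h₁ h₂ => rw [add_lie]; exact S.add_mem h₁ h₂
  | add_right _ _ _ _ _ _ h₁ h₂ => rw [lie_add]; exact S.add_mem h₁ h₂
  | smul_left _ _ _ _ _ h => rw [smul_lie]; exact S.smul_mem _ h
  | smul_right _ _ _ _ _ h => rw [lie_smul]; exact S.smul_mem _ h

theorem LieAlgebra.derivedSeries_succ_le_of_lie_mem {k : ℕ} {S T : Submodule R L}
    (hk : (derivedSeries R L k).toSubmodule ≤ S) (h : ∀ x ∈ S, ∀ y ∈ S, ⁅x, y⁆ ∈ T) :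
    (derivedSeries R L (k + 1)).toSubmodule ≤ T := by
  rw [derivedSeries_def, derivedSeriesOfIdeal_succ, ← derivedSeries_def,
    LieSubmodule.lieIdeal_oper_eq_linear_span', Submodule.span_le]
  rintro _ ⟨x, hx, y, hy, rfl⟩
  exact h x (hk hx) y (hk hy)

theorem LieAlgebra.isSolvable_of_lie_mem {N Z : Submodule R L} (hN : ∀ x y : L, ⁅x, y⁆ ∈ N)
    (hZ : ∀ x ∈ N, ∀ y ∈ N, ⁅x, y⁆ ∈ Z) (hab : ∀ x ∈ Z, ∀ y ∈ Z, ⁅x, y⁆ = 0) :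
    IsSolvable L := by
  have h₁ := derivedSeries_succ_le_of_lie_mem (k := 0) (S := ⊤) le_top fun x _ y _ => hN x y
  have h₃ := derivedSeries_succ_le_of_lie_mem (T := ⊥)
    (derivedSeries_succ_le_of_lie_mem h₁ hZ) fun x hx y hy => by simp [hab x hx y hy]
  exact IsSolvable.mk (k := 3) ((LieSubmodule.toSubmodule_eq_bot _).mp (le_bot_iff.mp h₃))

end Solvable

section HeisenbergExtension

variable {R L : Type*} [CommRing R] [LieRing L] [LieAlgebra R L]

structure IsHeisenbergExtensionBasis (b : Module.Basis (Fin 4) R L) (c d₀ d₁ d₂ u : R) :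
    Prop where
  lie_zero_one : ⁅b 0, b 1⁆ = c • b 2
  lie_zero_two : ⁅b 0, b 2⁆ = 0
  lie_one_two : ⁅b 1, b 2⁆ = 0
  lie_three_zero : ⁅b 3, b 0⁆ = d₀ • b 0 + u • b 1
  lie_three_one : ⁅b 3, b 1⁆ = d₁ • b 1
  lie_three_two : ⁅b 3, b 2⁆ = d₂ • b 2

namespace IsHeisenbergExtensionBasis

variable {b : Module.Basis (Fin 4) R L} {c d₀ d₁ d₂ u : R}

theorem lie_basis (h : IsHeisenbergExtensionBasis b c d₀ d₁ d₂ u) (i j : Fin 4) :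
    ⁅b i, b j⁆ = ![![0, c • b 2, 0, -(d₀ • b 0 + u • b 1)],
                  ![-(c • b 2), 0, 0, -(d₁ • b 1)],
                  ![0, 0, 0, -(d₂ • b 2)],
                  ![d₀ • b 0 + u • b 1, d₁ • b 1, d₂ • b 2, 0]] i j := by
  fin_cases i <;> fin_cases j <;>
    first
      | simp [h.lie_zero_one, h.lie_zero_two, h.lie_one_two, h.lie_three_zero, h.lie_three_one,
          h.lie_three_two]; done
      | rw [← lie_skew]
        simp [h.lie_zero_one, h.lie_zero_two, h.lie_one_two, h.lie_three_zero, h.lie_three_one,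
          h.lie_three_two]

theorem isSolvable (h : IsHeisenbergExtensionBasis b c d₀ d₁ d₂ u) : IsSolvable L := by
  set N := Submodule.span R {b 0, b 1, b 2}
  set Z := R ∙ b 2
  have hZ : ∀ x ∈ N, ∀ y ∈ N, ⁅x, y⁆ ∈ Z := by
    refine fun x hx y hy => Submodule.lie_mem_of_mem_span (fun x hx y hy => ?_) hx hy
    simp only [Set.mem_insert_iff, Set.mem_singleton_iff] at hx hy
    rcases hx with rfl | rfl | rfl <;> rcases hy with rfl | rfl | rfl <;>
      simp [h.lie_basis, Z, Submodule.smul_mem, Submodule.mem_span_singleton_self]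
  refine isSolvable_of_lie_mem (N := N) (Z := Z) (fun x y => ?_) hZ fun x hx y hy => ?_
  · have h₀ : b 0 ∈ N := Submodule.subset_span (by simp)
    have h₁ : b 1 ∈ N := Submodule.subset_span (by simp)
    have h₂ : b 2 ∈ N := Submodule.subset_span (by simp)
    refine Submodule.lie_mem_of_mem_span ?_ (b.mem_span x) (b.mem_span y)
    rintro _ ⟨i, rfl⟩ _ ⟨j, rfl⟩
    fin_cases i <;> fin_cases j <;>
      simp [h.lie_basis, N.add_mem, N.neg_mem, N.smul_mem, h₀, h₁, h₂]
  · exact (Submodule.mem_bot R).mp (Submodule.lie_mem_of_mem_span (by simp) hx hy)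

theorem killingForm_basis (h : IsHeisenbergExtensionBasis b c d₀ d₁ d₂ u) (i j : Fin 4) :
    killingForm R L (b i) (b j) = if i = 3 ∧ j = 3 then d₀ ^ 2 + d₁ ^ 2 + d₂ ^ 2 else 0 := by
  rw [killingForm_apply_apply, LinearMap.trace_eq_sum_basis_repr b]
  fin_cases i <;> fin_cases j <;> simp [Fin.sum_univ_four, h.lie_basis, sq]

theorem trace_ad_basis (h : IsHeisenbergExtensionBasis b c d₀ d₁ d₂ u) (i : Fin 4) :
    LinearMap.trace R L (ad R L (b i)) = if i = 3 then d₀ + d₁ + d₂ else 0 := by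
  rw [LinearMap.trace_eq_sum_basis_repr b]
  fin_cases i <;> simp [Fin.sum_univ_four, h.lie_basis]

theorem killingForm_apply_self (h : IsHeisenbergExtensionBasis b c d₀ d₁ d₂ u) (y : L) :
    killingForm R L y y = b.repr y 3 ^ 2 * (d₀ ^ 2 + d₁ ^ 2 + d₂ ^ 2) := by
  rw [LinearMap.apply_apply_eq_repr_mul_repr_of_apply_basis_eq_zero b 3
    (fun i j hij => by simp [h.killingForm_basis, not_and_or.mpr hij]), h.killingForm_basis]
  simp [sq]

theorem trace_ad (h : IsHeisenbergExtensionBasis b c d₀ d₁ d₂ u) (y : L) :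
    LinearMap.trace R L (ad R L y) = b.repr y 3 * (d₀ + d₁ + d₂) := by
  simpa [h.trace_ad_basis] using b.apply_eq_repr_mul_of_apply_eq_zero 3
    (f := LinearMap.trace R L ∘ₗ (ad R L : L →ₗ[R] Module.End R L))
    (fun i hi => by simp [h.trace_ad_basis, hi]) y

end IsHeisenbergExtensionBasis

end HeisenbergExtension

/-- The Lie algebras `𝔤₁ = (6/7 e¹⁴, 8/7 e¹⁴ − 2/7 e²⁴, 4/7 e¹² + 4/7 e³⁴, 0)` and
`𝔤₂ = (√3/6 e¹⁴, √3/6 e²⁴, √3/3 e¹² + √3/3 e³⁴, 0)` are solvable and not isomorphic. -/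
theorem solvable_extensions_not_isomorphic
    {L₁ L₂ : Type*} [LieRing L₁] [LieAlgebra ℝ L₁] [LieRing L₂] [LieAlgebra ℝ L₂]
    (e : Module.Basis (Fin 4) ℝ L₁) (f : Module.Basis (Fin 4) ℝ L₂)
    (h12 : ⁅e 0, e 1⁆ = (4 / 7 : ℝ) • e 2)
    (h13 : ⁅e 0, e 2⁆ = 0)
    (h23 : ⁅e 1, e 2⁆ = 0)
    (h41 : ⁅e 3, e 0⁆ = (6 / 7 : ℝ) • e 0 + (8 / 7 : ℝ) • e 1)
    (h42 : ⁅e 3, e 1⁆ = (-(2 / 7) : ℝ) • e 1)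
    (h43 : ⁅e 3, e 2⁆ = (4 / 7 : ℝ) • e 2)
    (h12' : ⁅f 0, f 1⁆ = (Real.sqrt 3 / 3) • f 2)
    (h13' : ⁅f 0, f 2⁆ = 0)
    (h23' : ⁅f 1, f 2⁆ = 0)
    (h41' : ⁅f 3, f 0⁆ = (Real.sqrt 3 / 6) • f 0)
    (h42' : ⁅f 3, f 1⁆ = (Real.sqrt 3 / 6) • f 1)
    (h43' : ⁅f 3, f 2⁆ = (Real.sqrt 3 / 3) • f 2) :
    LieAlgebra.IsSolvable L₁ ∧ LieAlgebra.IsSolvable L₂ ∧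
      IsEmpty (L₁ ≃ₗ⁅ℝ⁆ L₂) := by
  have h₁ : IsHeisenbergExtensionBasis e (4 / 7) (6 / 7) (-(2 / 7)) (4 / 7) (8 / 7) :=
    ⟨h12, h13, h23, h41, h42, h43⟩
  have h₂ : IsHeisenbergExtensionBasis f (√3 / 3) (√3 / 6) (√3 / 6) (√3 / 3) 0 :=
    ⟨h12', h13', h23', by rw [h41', zero_smul, add_zero], h42', h43'⟩
  refine ⟨h₁.isSolvable, h₂.isSolvable, ⟨fun φ => ?_⟩⟩
  have hK := h₂.killingForm_apply_self (φ (e 3))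
  have hT := h₂.trace_ad (φ (e 3))
  rw [killingForm_of_equiv_apply, h₁.killingForm_basis] at hK
  rw [← LieAlgebra.conj_ad_apply, LinearMap.trace_conj', h₁.trace_ad_basis] at hT
  norm_num at hK hT
  nlinarith [Real.sq_sqrt (show (0 : ℝ) ≤ 3 by norm_num)]
end

section
/- Let c₁₂₃, c₁₃₄, c₂₃₅ be nonzero real numbers and let 𝔤 be the real Lie algebra with basis e_1,…,e_5 and nonzero brackets [e_1,e_2] = c₁₂₃ e_3, [e_1,e_3] = c₁₃₄ e_4, [e_2,e_3] = c₂₃₅ e_5. Then a linear map D: 𝔤 → 𝔤 with matrix entries d_{ij} (so D e_j = Σ_i d_{ij} e_i) is a derivation of 𝔤 if and only if: d_{11} = d_{33} − d_{22}, d_{44} = 2d_{33} − d_{22}, d_{55} = d_{22} + d_{33}, d_{43} = (c₁₃₄/c₁₂₃) d_{32}, d_{53} = −(c₂₃₅/c₁₂₃) d_{31}, d_{54} = (c₂₃₅/c₁₃₄) d_{21}, d_{45} = (c₁₃₄/c₂₃₅) d_{12}, and d_{13} = d_{14} = d_{15} = d_{23} = d_{24} = d_{25} = d_{34} = d_{35}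 = 0 (while d_{22}, d_{33}, d_{12}, d_{21}, d_{31}, d_{32}, d_{41}, d_{42}, d_{51}, d_{52} are arbitrary). -/
/-!
In the coordinates of the basis `e` the bracket is the explicit bilinear map `coordBracket` and
`D` acts by the matrix `d`, so the Leibniz rule becomes a polynomial identity in two coordinate
vectors. Its instances at the pairs `(e₁, e₂)`, `(e₁, e₃)`, `(e₂, e₃)` are fifteen scalar
equations, which solve to the stated conditions; conversely, once `d` satisfies them the identity
holds for all coordinate vectors by direct expansion.
-/

open Matrix

section

variable {R L ι : Type*} [CommRing R] [LieRing L] [LieAlgebra R L] [Fintype ι]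
  (e : Module.Basis ι R L) {D : Module.End R L} {d : Matrix ι ι R}

theorem Module.Basis.equivFun_map_eq_mulVec (hd : ∀ j, D (e j) = ∑ i, d i j • e i) (x : L) :
    e.equivFun (D x) = d *ᵥ e.equivFun x := by
  apply e.equivFun.symm.injective
  rw [LinearEquiv.symm_apply_apply, e.equivFun_symm_apply]
  conv_lhs => rw [← e.sum_equivFun x]
  simp only [map_sum, map_smul, hd, Finset.smul_sum, smul_smul, mulVec, dotProduct,
    Finset.sum_smul]
  rw [Finset.sum_comm]
  simp_rw [mul_comm]

theorem leibniz_iff_mulVec_leibniz (br : (ι → R) → (ι → R) → ι → R)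
    (hbr : ∀ x y, e.equivFun ⁅x, y⁆ = br (e.equivFun x) (e.equivFun y))
    (hd : ∀ j, D (e j) = ∑ i, d i j • e i) :
    (∀ x y : L, D ⁅x, y⁆ = ⁅D x, y⁆ + ⁅x, D y⁆) ↔
      ∀ u v, d *ᵥ br u v = br (d *ᵥ u) v + br u (d *ᵥ v) := by
  have hD := e.equivFun_map_eq_mulVec hd
  constructor
  · intro h u v
    obtain ⟨x, rfl⟩ := e.equivFun.surjective u
    obtain ⟨y, rfl⟩ := e.equivFun.surjective v
    simpa only [map_add, hD, hbr] using congrArg e.equivFun (h x y)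
  · intro h x y
    apply e.equivFun.injective
    simp only [map_add, hD, hbr, h]

end

def coordBracket {R : Type*} [CommRing R] (c₁₂₃ c₁₃₄ c₂₃₅ : R) (u v : Fin 5 → R) : Fin 5 → R :=
  ![0, 0, c₁₂₃ * (u 0 * v 1 - u 1 * v 0), c₁₃₄ * (u 0 * v 2 - u 2 * v 0),
    c₂₃₅ * (u 1 * v 2 - u 2 * v 1)]

theorem equivFun_lie_eq_coordBracket {R L : Type*} [CommRing R] [LieRing L] [LieAlgebra R L]
    {c₁₂₃ c₁₃₄ c₂₃₅ : R} (e : Module.Basis (Fin 5) R L)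
    (h12 : ⁅e 0, e 1⁆ = c₁₂₃ • e 2) (h13 : ⁅e 0, e 2⁆ = c₁₃₄ • e 3)
    (h23 : ⁅e 1, e 2⁆ = c₂₃₅ • e 4)
    (h14 : ⁅e 0, e 3⁆ = 0) (h15 : ⁅e 0, e 4⁆ = 0) (h24 : ⁅e 1, e 3⁆ = 0)
    (h25 : ⁅e 1, e 4⁆ = 0) (h34 : ⁅e 2, e 3⁆ = 0) (h35 : ⁅e 2, e 4⁆ = 0)
    (h45 : ⁅e 3, e 4⁆ = 0) (x y : L) :
    e.equivFun ⁅x, y⁆ = coordBracket c₁₂₃ c₁₃₄ c₂₃₅ (e.equivFun x) (e.equivFun y) := by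
  have skew {a b c : L} (h : ⁅a, b⁆ = c) : ⁅b, a⁆ = -c := by rw [← lie_skew, h]
  conv_lhs => rw [← e.sum_equivFun x, ← e.sum_equivFun y]
  simp only [Fin.sum_univ_five, lie_add, add_lie, lie_smul, smul_lie, lie_self, h12, h13, h23,
    h14, h15, h24, h25, h34, h35, h45, skew h12, skew h13, skew h23, skew h14, skew h15,
    skew h24, skew h25, skew h34, skew h35, skew h45]
  ext k
  fin_cases k <;> simp [coordBracket] <;> ring

theorem coordBracket_leibniz_iff {K : Type*} [Field K] {c₁₂₃ c₁₃₄ c₂₃₅ : K}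
    (hc₁₂₃ : c₁₂₃ ≠ 0) (hc₁₃₄ : c₁₃₄ ≠ 0) (hc₂₃₅ : c₂₃₅ ≠ 0) (d : Matrix (Fin 5) (Fin 5) K) :
    (∀ u v, d *ᵥ coordBracket c₁₂₃ c₁₃₄ c₂₃₅ u v =
        coordBracket c₁₂₃ c₁₃₄ c₂₃₅ (d *ᵥ u) v + coordBracket c₁₂₃ c₁₃₄ c₂₃₅ u (d *ᵥ v)) ↔
      (d 0 0 = d 2 2 - d 1 1 ∧
       d 3 3 = 2 * d 2 2 - d 1 1 ∧
       d 4 4 = d 1 1 + d 2 2 ∧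
       d 3 2 = c₁₃₄ / c₁₂₃ * d 2 1 ∧
       d 4 2 = -(c₂₃₅ / c₁₂₃) * d 2 0 ∧
       d 4 3 = c₂₃₅ / c₁₃₄ * d 1 0 ∧
       d 3 4 = c₁₃₄ / c₂₃₅ * d 0 1 ∧
       d 0 2 = 0 ∧ d 0 3 = 0 ∧ d 0 4 = 0 ∧
       d 1 2 = 0 ∧ d 1 3 = 0 ∧ d 1 4 = 0 ∧
       d 2 3 = 0 ∧ d 2 4 = 0) := by
  constructor
  · intro H
    have H01 := H (Pi.single 0 1) (Pi.single 1 1)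
    have H02 := H (Pi.single 0 1) (Pi.single 2 1)
    have H12 := H (Pi.single 1 1) (Pi.single 2 1)
    simp only [coordBracket, funext_iff, Fin.forall_fin_succ, mulVec, dotProduct, Fin.isValue,
      Pi.single_eq_same, mul_one, ne_eq, one_ne_zero, not_false_eq_true, Pi.single_eq_of_ne,
      zero_ne_one, mul_zero, sub_zero, Fin.reduceEq, sub_self, Fin.sum_univ_five, cons_val_zero,
      cons_val_one, add_zero, cons_val, zero_add, zero_sub, mul_neg, one_mul, zero_mul,
      Pi.add_apply, mul_eq_zero, hc₁₂₃, hc₁₃₄, hc₂₃₅, or_false, Fin.succ_zero_eq_one,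
      Fin.succ_one_eq_two, Fin.reduceSucc, cons_val_succ, cons_val_fin_one, IsEmpty.forall_iff,
      and_true] at H01 H02 H12
    obtain ⟨h02, h12, h22, h32, h42⟩ := H01
    obtain ⟨h03, h13, h23, h33, h43⟩ := H02
    obtain ⟨h04, h14, h24, h34, h44⟩ := H12
    have h00 : d 0 0 = d 2 2 - d 1 1 :=
      mul_right_cancel₀ hc₁₂₃ (by linear_combination -h22)
    refine ⟨h00, mul_right_cancel₀ hc₁₃₄ (by linear_combination h33 + c₁₃₄ * h00),
      mul_right_cancel₀ hc₂₃₅ (by linear_combination h44), ?_, ?_, ?_, ?_,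
      h02, h03, h04, h12, h13, h14,
      mul_right_cancel₀ hc₁₃₄ (by linear_combination h23 + c₁₂₃ * h12),
      mul_right_cancel₀ hc₂₃₅ (by linear_combination h24 - c₁₂₃ * h02)⟩
    · field_simp; linear_combination h32
    · field_simp; linear_combination h42
    · field_simp; linear_combination h43
    · field_simp; linear_combination h34
  · rintro ⟨h00, h33, h44, h32, h42, h43, h34, h02, h03, h04, h12, h13, h14, h23, h24⟩ u v
    ext k
    fin_cases k <;>
      simp only [coordBracket, mulVec, dotProduct, Fin.sum_univ_five, Fin.isValue, Fin.zero_eta,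
        Fin.mk_one, Fin.reduceFinMk, cons_val_zero, cons_val_one, cons_val, Pi.add_apply,
        mul_zero, zero_mul, add_zero, zero_add, neg_mul, h00, h33, h44, h32, h42, h43, h34, h02,
        h03, h04, h12, h13, h14, h23, h24] <;>
      field_simp <;> ring

/-- Derivations of the nilpotent Lie algebra `(0,0, c₁₂₃ e¹², c₁₃₄ e¹³, c₂₃₅ e²³)`:
a linear map `D` with matrix `d` (so `D e_j = Σ_i d i j • e_i`) is a derivation if and
only if the stated linear conditions on the entries of `d` hold. -/
theorem derivation_iff_matrix_conditions
    {L : Type*} [LieRing L] [LieAlgebra ℝ L]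
    (c₁₂₃ c₁₃₄ c₂₃₅ : ℝ) (hc₁₂₃ : c₁₂₃ ≠ 0) (hc₁₃₄ : c₁₃₄ ≠ 0) (hc₂₃₅ : c₂₃₅ ≠ 0)
    (e : Module.Basis (Fin 5) ℝ L)
    (h12 : ⁅e 0, e 1⁆ = c₁₂₃ • e 2)
    (h13 : ⁅e 0, e 2⁆ = c₁₃₄ • e 3)
    (h23 : ⁅e 1, e 2⁆ = c₂₃₅ • e 4)
    (h14 : ⁅e 0, e 3⁆ = 0) (h15 : ⁅e 0, e 4⁆ = 0)
    (h24 : ⁅e 1, e 3⁆ = 0) (h25 : ⁅e 1, e 4⁆ = 0)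
    (h34 : ⁅e 2, e 3⁆ = 0) (h35 : ⁅e 2, e 4⁆ = 0)
    (h45 : ⁅e 3, e 4⁆ = 0)
    (D : Module.End ℝ L) (d : Matrix (Fin 5) (Fin 5) ℝ)
    (hd : ∀ j, D (e j) = ∑ i, d i j • e i) :
    (∀ x y : L, D ⁅x, y⁆ = ⁅D x, y⁆ + ⁅x, D y⁆) ↔
      (d 0 0 = d 2 2 - d 1 1 ∧
       d 3 3 = 2 * d 2 2 - d 1 1 ∧
       d 4 4 = d 1 1 + d 2 2 ∧
       d 3 2 = c₁₃₄ / c₁₂₃ * d 2 1 ∧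
       d 4 2 = -(c₂₃₅ / c₁₂₃) * d 2 0 ∧
       d 4 3 = c₂₃₅ / c₁₃₄ * d 1 0 ∧
       d 3 4 = c₁₃₄ / c₂₃₅ * d 0 1 ∧
       d 0 2 = 0 ∧ d 0 3 = 0 ∧ d 0 4 = 0 ∧
       d 1 2 = 0 ∧ d 1 3 = 0 ∧ d 1 4 = 0 ∧
       d 2 3 = 0 ∧ d 2 4 = 0) := by
  rw [leibniz_iff_mulVec_leibniz e _ (equivFun_lie_eq_coordBracket e h12 h13 h23 h14 h15 h24
    h25 h34 h35 h45) hd]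
  exact coordBracket_leibniz_iff hc₁₂₃ hc₁₃₄ hc₂₃₅ d
end
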